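/- For every integer n ≥ 1, the number of Dyck paths of semilength n in which every peak occurs at odd height equals the number of Motzkin paths of length n whose first step is a flatstep. -/

import Mathlib

/-- A Dyck path: each step is +1 (upstep U) or -1 (downstep D), all partial sums
are nonnegative, and the total sum is 0. -/
def IsDyckPath (P : List ℤ) : Prop :=
  (∀ s ∈ P, s = 1 ∨ s = -1) ∧ (∀ k, 0 ≤ (P.take k).sum) ∧ P.sum = 0

/-- A Motzkin path: each step is +1 (U), 0 (F), or -1 (D), all partial sums
are nonnegative, and the total sum is 0. -/
def IsMotzkinPath (M : List ℤ) : Prop :=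
  (∀ s ∈ M, s = 1 ∨ s = 0 ∨ s = -1) ∧ (∀ k, 0 ≤ (M.take k).sum) ∧ M.sum = 0

/-- A peak at position `i`: an upstep at `i` immediately followed by a downstep. -/
def IsPeak (P : List ℤ) (i : ℕ) : Prop :=
  P[i]? = some 1 ∧ P[i + 1]? = some (-1)

/-- The height of the peak at position `i`: the level reached just after the upstep. -/
def peakHeight (P : List ℤ) (i : ℕ) : ℤ := (P.take (i + 1)).sum

/-- Every peak is at odd height; by convention the empty path has one peak at height 0
(so `AllPeaksOdd []` is false). -/
def AllPeaksOdd (P : List ℤ) : Prop :=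
  (P = [] → Odd (0 : ℤ)) ∧ ∀ i, IsPeak P i → Odd (peakHeight P i)

/-- Every peak is at even height; by convention the empty path has one peak at height 0. -/
def AllPeaksEven (P : List ℤ) : Prop :=
  (P = [] → Even (0 : ℤ)) ∧ ∀ i, IsPeak P i → Even (peakHeight P i)

/-- The Motzkin path has no flatstep at ground level. -/
def NoGroundFlat (M : List ℤ) : Prop :=
  ∀ i, M[i]? = some 0 → (M.take i).sum ≠ 0

/-- Replacement of a contiguous pair of Dyck steps by a Motzkin step:
(U,U) ↦ U, (D,U) ↦ F, (D,D) ↦ D. -/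
def pairStep (a b : ℤ) : ℤ :=
  if a = 1 ∧ b = 1 then 1
  else if a = -1 ∧ b = 1 then 0
  else if a = -1 ∧ b = -1 then -1
  else 0

/-- Split a list of steps into contiguous pairs and replace each pair via `pairStep`. -/
def pairContract (P : List ℤ) : List ℤ :=
  (List.range (P.length / 2)).map fun k => pairStep (P.getD (2 * k) 0) (P.getD (2 * k + 1) 0)

/-- The number of downsteps ending at ground level. -/
def groundDownCount (P : List ℤ) : ℕ :=
  ((Finset.range P.length).filter fun i =>
    P[i]? = some (-1) ∧ (P.take (i + 1)).sum = 0).card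

/-- The number of flatsteps at ground level. -/
def groundFlatCount (M : List ℤ) : ℕ :=
  ((Finset.range M.length).filter fun i =>
    M[i]? = some 0 ∧ (M.take i).sum = 0).card

/-- The number of peaks. -/
def peakCount (P : List ℤ) : ℕ :=
  ((Finset.range P.length).filter fun i =>
    P[i]? = some 1 ∧ P[i + 1]? = some (-1)).card

/-- The number of occurrences of an upstep immediately followed by an upstep. -/
def uuCount (M : List ℤ) : ℕ :=
  ((Finset.range M.length).filter fun i =>
    M[i]? = some 1 ∧ M[i + 1]? = some 1).card

/-- The number of occurrences of a flatstep immediately followed by an upstep. -/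
def fuCount (M : List ℤ) : ℕ :=
  ((Finset.range M.length).filter fun i =>
    M[i]? = some 0 ∧ M[i + 1]? = some 1).card

namespace DyckOddAux

/-- Expansion of a Motzkin step list into Dyck-path pairs: U ↦ UU, F ↦ DU, D ↦ DD. -/
def expand : List ℤ → List ℤ
  | [] => []
  | s :: l => (if s = 1 then [1, 1] else if s = 0 then [-1, 1] else [-1, -1]) ++ expand l

@[simp] lemma expand_nil : expand [] = [] := rfl

lemma expand_cons (s : ℤ) (l : List ℤ) :
    expand (s :: l) = (if s = 1 then [1, 1] else if s = 0 then [-1, 1] else [-1, -1]) ++ expand l := rfl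

@[simp] lemma expand_length (M : List ℤ) : (expand M).length = 2 * M.length := by
  induction M with
  | nil => simp
  | cons s l ih =>
    rw [expand_cons]
    split_ifs <;> simp [ih] <;> omega

lemma expand_mem (M : List ℤ) : ∀ s ∈ expand M, s = 1 ∨ s = -1 := by
  induction M with
  | nil => simp
  | cons a l ih =>
    rw [expand_cons]
    intro s hs
    rcases List.mem_append.1 hs with h | h
    · split_ifs at h <;> simp at h <;> omega
    · exact ih s h

lemma expand_take (M : List ℤ) (hM : ∀ s ∈ M, s = 1 ∨ s = 0 ∨ s = -1) (k : ℕ) :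
    ((expand M).take (2 * k)).sum = 2 * (M.take k).sum := by
  induction M generalizing k with
  | nil => simp
  | cons a l ih =>
    rcases Nat.eq_zero_or_pos k with rfl | hk
    · simp
    · obtain ⟨k, rfl⟩ := Nat.exists_eq_add_of_le hk
      have ha := hM a (by simp)
      have hl : ∀ s ∈ l, s = 1 ∨ s = 0 ∨ s = -1 := fun s hs => hM s (by simp [hs])
      have h2 : 2 * (1 + k) = 2 * k + 1 + 1 := by ring
      have h1 : 1 + k = k + 1 := by ring
      rw [expand_cons, h2, h1]
      rcases ha with rfl | rfl | rfl <;> norm_num [List.take_succ_cons, ih hl k] <;> ring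

lemma expand_sum (M : List ℤ) (hM : ∀ s ∈ M, s = 1 ∨ s = 0 ∨ s = -1) :
    (expand M).sum = 2 * M.sum := by
  have h := expand_take M hM M.length
  rwa [List.take_of_length_le (by simp), List.take_of_length_le le_rfl] at h

lemma expand_take_ge (M : List ℤ) (hM : ∀ s ∈ M, s = 1 ∨ s = 0 ∨ s = -1) :
    ∀ c : ℤ, (∀ j, 0 ≤ c + (M.take j).sum) → ∀ k, -1 ≤ 2 * c + ((expand M).take k).sum := by
  induction M with
  | nil =>
    intro c hc k
    have := hc 0
    simp at this
    simp
    omega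
  | cons a l ih =>
    intro c hc k
    have hc0 : 0 ≤ c := by have := hc 0; simpa using this
    have ha := hM a (by simp)
    have hl : ∀ s ∈ l, s = 1 ∨ s = 0 ∨ s = -1 := fun s hs => hM s (by simp [hs])
    have hc' : ∀ j, 0 ≤ (c + a) + (l.take j).sum := by
      intro j
      have := hc (j + 1)
      simp [List.take_succ_cons] at this
      linarith
    match k with
    | 0 => simp; omega
    | 1 =>
      rw [expand_cons]
      rcases ha with rfl | rfl | rfl <;> norm_num <;> omega
    | (k + 2) =>
      rw [expand_cons]
      have ihk := ih hl (c + a) hc' k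
      rcases ha with rfl | rfl | rfl <;>
        norm_num [List.take_succ_cons] at ihk ⊢ <;> linarith

lemma sum_take_mod (P : List ℤ) (h : ∀ s ∈ P, s = 1 ∨ s = -1) :
    ∀ k, k ≤ P.length → (P.take k).sum % 2 = (k : ℤ) % 2 := by
  induction P with
  | nil =>
    intro k hk
    have : k = 0 := by simpa using hk
    subst this; simp
  | cons a l ih =>
    intro k hk
    match k with
    | 0 => simp
    | (k + 1) =>
      have ha := h a (by simp)
      have hl : ∀ s ∈ l, s = 1 ∨ s = -1 := fun s hs => h s (by simp [hs])
      have hk' : k ≤ l.length := by simpa using hk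
      have := ih hl k hk'
      simp only [List.take_succ_cons, List.sum_cons]
      push_cast
      omega

lemma expand_pair (M : List ℤ) :
    ∀ k, (expand M)[2 * k]? = some 1 → (expand M)[2 * k + 1]? = some 1 := by
  induction M with
  | nil => intro k hk; simp at hk
  | cons a l ih =>
    intro k hk
    match k with
    | 0 =>
      rw [expand_cons] at hk ⊢
      split_ifs at hk ⊢ with h1 h2 <;> simp_all
    | (k + 1) =>
      have h2 : 2 * (k + 1) = 2 * k + 1 + 1 := by ring
      rw [expand_cons, h2] at hk ⊢
      split_ifs at hk ⊢ <;>
        simpa using ih k (by simpa using hk)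

lemma pairs_exists : ∀ (Q : List ℤ), (∀ s ∈ Q, s = 1 ∨ s = -1) → Even Q.length →
    (∀ k, Q[2 * k]? = some 1 → Q[2 * k + 1]? ≠ some (-1)) →
    ∃ M, (∀ s ∈ M, s = 1 ∨ s = 0 ∨ s = -1) ∧ Q = expand M
  | [] => fun _ _ _ => ⟨[], by simp⟩
  | [a] => fun _ he _ => by simp [Nat.even_iff] at he
  | a :: b :: Q => fun h1 h2 h3 => by
    have ha := h1 a (by simp)
    have hb := h1 b (by simp)
    have hQ : ∀ s ∈ Q, s = 1 ∨ s = -1 := fun s hs => h1 s (by simp [hs])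
    have heQ : Even Q.length := by
      simp only [List.length_cons] at h2
      rcases h2 with ⟨m, hm⟩
      exact ⟨m - 1, by omega⟩
    have h3Q : ∀ k, Q[2 * k]? = some 1 → Q[2 * k + 1]? ≠ some (-1) := by
      intro k hk
      have e : ∀ j, Q[j]? = (a :: b :: Q)[j + 2]? := by intro j; simp
      have := h3 (k + 1)
      rw [show 2 * (k + 1) = 2 * k + 2 by ring] at this
      rw [e, show 2 * k + 1 + 2 = 2 * k + 2 + 1 from by ring]
      exact this (by rw [← e]; exact hk)
    obtain ⟨M, hM, rfl⟩ := pairs_exists Q hQ heQ h3Q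
    have hab : ¬(a = 1 ∧ b = -1) := by
      intro ⟨ha1, hb1⟩
      exact h3 0 (by simp [ha1]) (by simp [hb1])
    refine ⟨(if a = 1 then 1 else if b = 1 then 0 else -1) :: M, ?_, ?_⟩
    · intro s hs
      rcases List.mem_cons.1 hs with rfl | hs
      · split_ifs <;> simp
      · exact hM s hs
    · rw [expand_cons]
      rcases ha with rfl | rfl <;> rcases hb with rfl | rfl <;> simp_all

lemma expand_inj : ∀ A B : List ℤ, (∀ s ∈ A, s = 1 ∨ s = 0 ∨ s = -1) →
    (∀ s ∈ B, s = 1 ∨ s = 0 ∨ s = -1) → expand A = expand B → A = B := by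
  intro A
  induction A with
  | nil =>
    intro B _ _ h
    cases B with
    | nil => rfl
    | cons t B' =>
      exfalso
      have := congrArg List.length h
      rw [expand_length, expand_length] at this
      simp at this
  | cons a A' ih =>
    intro B hA hB h
    cases B with
    | nil =>
      exfalso
      have := congrArg List.length h
      rw [expand_length, expand_length] at this
      simp at this
    | cons t B' =>
      have ha := hA a (by simp)
      have ht := hB t (by simp)
      have hA' : ∀ s ∈ A', s = 1 ∨ s = 0 ∨ s = -1 := fun s hs => hA s (by simp [hs])
      have hB' : ∀ s ∈ B', s = 1 ∨ s = 0 ∨ s = -1 := fun s hs => hB s (by simp [hs])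
      rw [expand_cons, expand_cons] at h
      rcases ha with rfl | rfl | rfl <;> rcases ht with rfl | rfl | rfl <;>
        norm_num at h <;> rw [ih B' hA' hB' h]

lemma psi_mem (M : List ℤ) (hM : IsMotzkinPath M) :
    (1 :: (expand M ++ [-1]) : List ℤ).length = 2 * (M.length + 1) ∧
    IsDyckPath (1 :: (expand M ++ [-1])) ∧ AllPeaksOdd (1 :: (expand M ++ [-1])) := by
  obtain ⟨hmem, hpre, hsum⟩ := hM
  set P : List ℤ := 1 :: (expand M ++ [-1]) with hP
  have hPmem : ∀ s ∈ P, s = 1 ∨ s = -1 := by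
    intro s hs
    rw [hP] at hs
    rcases List.mem_cons.1 hs with rfl | hs
    · left; rfl
    · rcases List.mem_append.1 hs with h | h
      · exact expand_mem M s h
      · right; simpa using h
  have hlen : P.length = 2 * (M.length + 1) := by rw [hP]; simp; ring
  refine ⟨hlen, ⟨hPmem, ?_, ?_⟩, ?_, ?_⟩
  · -- prefix sums
    intro k
    match k with
    | 0 => simp
    | (k + 1) =>
      rw [hP, List.take_succ_cons, List.sum_cons]
      by_cases hk : k ≤ (expand M).length
      · rw [List.take_append_of_le_length hk]
        have := expand_take_ge M hmem 0 (by intro j; simpa using hpre j) k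
        simpa using by linarith
      · rw [List.take_of_length_le (by
          simp only [List.length_append, List.length_cons, List.length_nil]; omega)]
        rw [List.sum_append, expand_sum M hmem, hsum]
        simp
  · -- total sum
    rw [hP]
    simp [expand_sum M hmem, hsum]
  · intro h; rw [hP] at h; simp at h
  · -- peaks odd
    intro i ⟨hi1, hi2⟩
    have hilt : i < P.length := (List.getElem?_eq_some_iff.1 hi1).1
    rcases Nat.even_or_odd i with he | ho
    · -- even index: height is odd by parity
      have hmod := sum_take_mod P hPmem (i + 1) (by omega)
      rw [Int.odd_iff]
      unfold peakHeight
      rcases he with ⟨m, rfl⟩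
      rw [hmod]
      push_cast
      omega
    · -- odd index: impossible
      exfalso
      rcases ho with ⟨k, rfl⟩
      rw [hP, List.getElem?_cons_succ] at hi1
      rw [hP, show 2 * k + 1 + 1 = (2 * k + 1) + 1 from rfl, List.getElem?_cons_succ] at hi2
      have hlt : 2 * k < (expand M).length := by
        by_contra hge
        push_neg at hge
        rw [List.getElem?_append_right hge] at hi1
        rcases Nat.lt_or_ge (2 * k - (expand M).length) 1 with h | h
        · interval_cases h' : (2 * k - (expand M).length)
          · simp [h'] at hi1
        · rw [List.getElem?_eq_none_iff.2 (by simpa using h)] at hi1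
          exact absurd hi1 (by simp)
      rw [List.getElem?_append_left hlt] at hi1
      have h2 := expand_pair M k hi1
      have hlt2 : 2 * k + 1 < (expand M).length := by
        rw [expand_length] at hlt ⊢; omega
      rw [List.getElem?_append_left hlt2, h2] at hi2
      exact absurd (Option.some.inj hi2) (by norm_num)

lemma phi_exists (n : ℕ) (hn : 1 ≤ n) (P : List ℤ) (hlen : P.length = 2 * n)
    (hD : IsDyckPath P) (hodd : AllPeaksOdd P) :
    ∃ M, (M.length = n - 1 ∧ IsMotzkinPath M) ∧ P = 1 :: (expand M ++ [-1]) := by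
  obtain ⟨hmem, hpre, hsum⟩ := hD
  obtain ⟨a, rest, rfl⟩ := List.exists_cons_of_ne_nil
    (show P ≠ [] by intro h; rw [h] at hlen; simp at hlen; omega)
  have ha : a = 1 := by
    have h1 := hpre 1
    simp at h1
    rcases hmem a (by simp) with h | h
    · exact h
    · omega
  subst ha
  have hrest : rest ≠ [] := by
    intro h; rw [h] at hlen; simp at hlen; omega
  obtain ⟨Q, b, hQb⟩ : ∃ Q b, rest = Q ++ [b] :=
    ⟨rest.dropLast, rest.getLast hrest, (List.dropLast_append_getLast hrest).symm⟩
  subst hQb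
  have hQlen : Q.length = 2 * n - 2 := by
    simp at hlen; omega
  have hQmem : ∀ s ∈ Q, s = 1 ∨ s = -1 := by
    intro s hs; exact hmem s (by simp [hs])
  have hsum' : 1 + (Q.sum + b) = 0 := by
    simpa using hsum
  have htk : (1 :: (Q ++ [b]) : List ℤ).take (Q.length + 1) = 1 :: Q := by
    rw [List.take_succ_cons, List.take_append_of_le_length le_rfl, List.take_of_length_le le_rfl]
  have hQpre : 0 ≤ 1 + Q.sum := by
    have := hpre (Q.length + 1)
    rwa [htk, List.sum_cons] at this
  have hb : b = -1 := by
    rcases hmem b (by simp) with h | h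
    · omega
    · exact h
  subst hb
  have hQsum : Q.sum = 0 := by omega
  have hpair : ∀ k, Q[2 * k]? = some 1 → Q[2 * k + 1]? ≠ some (-1) := by
    intro k h1 h2
    have hlt1 : 2 * k < Q.length := (List.getElem?_eq_some_iff.1 h1).1
    have hlt2 : 2 * k + 1 < Q.length := (List.getElem?_eq_some_iff.1 h2).1
    have hp1 : (1 :: (Q ++ [(-1 : ℤ)]))[2 * k + 1]? = some 1 := by
      rw [List.getElem?_cons_succ, List.getElem?_append_left hlt1]; exact h1
    have hp2 : (1 :: (Q ++ [(-1 : ℤ)]))[2 * k + 1 + 1]? = some (-1) := by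
      rw [List.getElem?_cons_succ, List.getElem?_append_left hlt2]; exact h2
    have hOdd := hodd.2 (2 * k + 1) ⟨hp1, hp2⟩
    unfold peakHeight at hOdd
    rw [Int.odd_iff] at hOdd
    have hmm : ∀ s ∈ (1 :: (Q ++ [(-1 : ℤ)])), s = 1 ∨ s = -1 := by
      intro s hs
      rcases List.mem_cons.1 hs with rfl | hs
      · left; rfl
      · rcases List.mem_append.1 hs with h | h
        · exact hQmem s h
        · right; simpa using h
    have hmod := sum_take_mod _ hmm (2 * k + 1 + 1) (by simp; omega)
    rw [hOdd] at hmod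
    push_cast at hmod
    omega
  obtain ⟨M, hMmem, hQM⟩ := pairs_exists Q hQmem ⟨n - 1, by omega⟩ hpair
  have hMlen : M.length = n - 1 := by
    have := expand_length M
    rw [← hQM, hQlen] at this
    omega
  refine ⟨M, ⟨hMlen, hMmem, ?_, ?_⟩, by rw [hQM]⟩
  · intro k
    by_cases hk : k ≤ M.length
    · have h1 : 2 * (M.take k).sum = (Q.take (2 * k)).sum := by
        rw [hQM]; exact (expand_take M hMmem k).symm
      have h2 : (1 :: (Q ++ [(-1 : ℤ)])).take (2 * k + 1) = 1 :: Q.take (2 * k) := by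
        rw [List.take_succ_cons, List.take_append_of_le_length (by
          rw [hQlen]; omega)]
      have := hpre (2 * k + 1)
      rw [h2, List.sum_cons] at this
      omega
    · rw [List.take_of_length_le (by omega)]
      have : 2 * M.sum = 0 := by rw [← expand_sum M hMmem, ← hQM, hQsum]
      omega
  · have : 2 * M.sum = 0 := by rw [← expand_sum M hMmem, ← hQM, hQsum]
    omega

end DyckOddAux

open DyckOddAux in
/-- The number of Dyck paths of semilength `n ≥ 1` with all peaks at odd height equals
the number of Motzkin paths of length `n` whose first step is a flatstep. -/
theorem dyck_odd_peaks_eq_motzkin_first_flat (n : ℕ) (hn : 1 ≤ n) :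
    {P : List ℤ | P.length = 2 * n ∧ IsDyckPath P ∧ AllPeaksOdd P}.ncard =
    {M : List ℤ | M.length = n ∧ IsMotzkinPath M ∧ M.head? = some 0}.ncard := by
  set T : Set (List ℤ) := {M | M.length = n - 1 ∧ IsMotzkinPath M} with hT
  have h1 : {P : List ℤ | P.length = 2 * n ∧ IsDyckPath P ∧ AllPeaksOdd P} =
      (fun M => 1 :: (expand M ++ [-1])) '' T := by
    ext P
    constructor
    · rintro ⟨hl, hD, ho⟩
      obtain ⟨M, hM, rfl⟩ := phi_exists n hn P hl hD ho
      exact ⟨M, hM, rfl⟩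
    · rintro ⟨M, ⟨hMl, hM⟩, rfl⟩
      obtain ⟨hlen, hD, ho⟩ := psi_mem M hM
      exact ⟨by rw [hlen, hMl]; omega, hD, ho⟩
  have h2 : {M : List ℤ | M.length = n ∧ IsMotzkinPath M ∧ M.head? = some 0} =
      (fun M => (0 : ℤ) :: M) '' T := by
    ext M
    constructor
    · rintro ⟨hl, ⟨hmem, hpre, hsum⟩, hh⟩
      obtain ⟨a, M', rfl⟩ := List.exists_cons_of_ne_nil
        (show M ≠ [] by intro h; rw [h] at hl; simp at hl; omega)
      have ha : a = 0 := by simpa using hh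
      subst ha
      refine ⟨M', ⟨by simp at hl; omega, fun s hs => hmem s (by simp [hs]), ?_, ?_⟩, rfl⟩
      · intro k
        have := hpre (k + 1)
        simpa [List.take_succ_cons] using this
      · simpa using hsum
    · rintro ⟨M', ⟨hMl, hmem, hpre, hsum⟩, rfl⟩
      refine ⟨by simp [hMl]; omega, ⟨?_, ?_, ?_⟩, rfl⟩
      · intro s hs
        rcases List.mem_cons.1 hs with rfl | hs
        · right; left; rfl
        · exact hmem s hs
      · intro k
        match k with
        | 0 => simp
        | (k + 1) => simpa [List.take_succ_cons] using hpre k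
      · simpa using hsum
  rw [h1, h2, Set.ncard_image_of_injOn, Set.ncard_image_of_injOn]
  · intro A hA B hB h
    simpa using h
  · intro A hA B hB h
    simp only [List.cons.injEq, true_and] at h
    exact expand_inj A B hA.2.1 hB.2.1 (List.append_cancel_right h)
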